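/- arXiv:1905.09303 — 2 statements merged into one kernel-verified Lean document; each statement's English description precedes it below -/
import Mathlib

section
/- (Shifted Turán–Kubilius inequality, L² form.) Let h ∈ F_q[x] be a fixed polynomial with deg h < n, and let ψ(P^m) be arbitrary complex numbers indexed by monic irreducible polynomials P and integers m ≥ 1. Then ∑_{f ∈ M_{n,q}} | ∑_{P^m ∥ f+h} ψ(P^m) − ∑_{(P,m): m·deg P ≤ n} ψ(P^m)·q^{−m·deg P}·(1 − q^{−deg P}) |² ≪ q^n · ∑_{(P,m): m·deg P ≤ n} |ψ(P^m)|²/q^{m·deg P}, with an absolute implied constant; here the inner sum on the left runs over exact prime powers P^m ∥ f+h (meaning P^m | f+h and P^{m+1} ∤ f+h). -/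
open scoped Classical
open Polynomial

/-- The exact exponent of the monic irreducible `P` in `f`, i.e. the `m` with `P^m ∥ f`. -/
noncomputable def exactExp {Fq : Type*} [Field Fq] (f P : Polynomial Fq) : ℕ :=
  (UniqueFactorizationMonoid.normalizedFactors f).count P

/-!
Write `M_n` for the monic polynomials of degree `n`. Substituting `g = f + h` permutes `M_n`, so
it suffices to bound the variance of `g ↦ ∑_{P^m ∥ g} ψ(P^m)` over `M_n`. Divisor counts in
`M_n` are exact: a monic `a` with `deg a ≤ n` divides exactly `q^(n - deg a)` elements. Hence, for
prime powers with `4 m deg P ≤ n`, exact divisibility by powers of distinct primes is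
uncorrelated, and the variance of that part is at most `q^n ∑ |ψ(P^m)|² q^(-m deg P)`. A
polynomial of degree `n` has at most three exact divisors `P^m` with `4 m deg P > n`, so
Cauchy–Schwarz bounds the rest.
-/

open Finset

namespace Finset

variable {ι α : Type*}

theorem sq_sum_mul_le_sum_mul_sum_sq (s : Finset ι) {w : ι → ℝ} (hw : ∀ i ∈ s, 0 ≤ w i)
    (f : ι → ℝ) :
    (∑ i ∈ s, w i * f i) ^ 2 ≤ (∑ i ∈ s, w i) * ∑ i ∈ s, w i * f i ^ 2 :=
  sum_sq_le_sum_mul_sum_of_sq_le_mul s hw (fun i hi => mul_nonneg (hw i hi) (sq_nonneg _))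
    fun i _ => le_of_eq (by ring)

theorem sum_sub_mul_sub_of_sum_eq (G : Finset α) {u v : α → ℝ} {a b : ℝ}
    (hu : ∑ g ∈ G, u g = #G * a) (hv : ∑ g ∈ G, v g = #G * b) :
    ∑ g ∈ G, (u g - a) * (v g - b) = ∑ g ∈ G, u g * v g - #G * a * b := by
  simp only [sub_mul, mul_sub, sum_sub_distrib, ← sum_mul, ← mul_sum, sum_const, nsmul_eq_mul,
    hu, hv]
  ring

theorem sum_sq_sum_mul_eq_sum_sum (G : Finset α) (A : Finset ι) (φ : ι → ℝ)
    (u : ι → α → ℝ) :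
    ∑ g ∈ G, (∑ s ∈ A, φ s * u s g) ^ 2 =
      ∑ s ∈ A, ∑ t ∈ A, φ s * φ t * ∑ g ∈ G, u s g * u t g := by
  simp_rw [sq, sum_mul_sum, mul_sum]
  rw [sum_comm]
  refine sum_congr rfl fun s _ => ?_
  rw [sum_comm]
  refine sum_congr rfl fun t _ => sum_congr rfl fun g _ => by ring

theorem sum_sum_ite_eq_mul_nonneg {κ : Type*} [DecidableEq κ] (A : Finset ι) (f : ι → κ)
    (b : ι → ℝ) :
    0 ≤ ∑ s ∈ A, ∑ t ∈ A, if f s = f t then b s * b t else 0 := by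
  have hfiber : ∀ s ∈ A, (∑ t ∈ A, if f s = f t then b s * b t else 0) =
      b s * ∑ t ∈ A with f t = f s, b t := by
    intro s _
    rw [mul_sum, sum_filter]
    exact sum_congr rfl fun t _ => by simp [eq_comm]
  rw [sum_congr rfl hfiber, ← sum_fiberwise_of_maps_to (fun s hs => mem_image_of_mem f hs)]
  refine sum_nonneg fun k _ => ?_
  rw [sum_congr rfl fun s hs => by rw [(mem_filter.mp hs).2], ← sum_mul]
  exact mul_self_nonneg _

end Finset

namespace Complex

theorem sq_norm_sum_mul_ofReal {ι : Type*} (A : Finset ι) (z : ι → ℂ) (r : ι → ℝ) :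
    ‖∑ i ∈ A, z i * r i‖ ^ 2 =
      (∑ i ∈ A, (z i).re * r i) ^ 2 + (∑ i ∈ A, (z i).im * r i) ^ 2 := by
  rw [Complex.sq_norm, Complex.normSq_apply, Complex.re_sum, Complex.im_sum]
  simp only [Complex.mul_re, Complex.mul_im, Complex.ofReal_re, Complex.ofReal_im, mul_zero,
    sub_zero, zero_add, sq]

end Complex

namespace Polynomial

section Monics

variable {Fq : Type*} [Field Fq] [Fintype Fq]

theorem finite_setOf_monic_natDegree_eq (n : ℕ) :
    {f : Fq[X] | f.Monic ∧ f.natDegree = n}.Finite :=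
  have : Finite (degreeLT Fq n) := .of_equiv _ (degreeLTEquiv Fq n).toEquiv.symm
  Set.finite_coe_iff.mp (.of_equiv _ (monicEquivDegreeLT n).symm)

variable (Fq) in
noncomputable def monicsOfNatDegree (n : ℕ) : Finset Fq[X] :=
  (finite_setOf_monic_natDegree_eq n).toFinset

@[simp]
theorem mem_monicsOfNatDegree {n : ℕ} {f : Fq[X]} :
    f ∈ monicsOfNatDegree Fq n ↔ f.Monic ∧ f.natDegree = n := by
  simp [monicsOfNatDegree]

theorem card_monicsOfNatDegree (n : ℕ) :
    #(monicsOfNatDegree Fq n) = Fintype.card Fq ^ n := by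
  rw [monicsOfNatDegree, ← Set.ncard_eq_toFinset_card _ (finite_setOf_monic_natDegree_eq n),
    ← Nat.card_coe_set_eq]
  exact (Nat.card_congr ((monicEquivDegreeLT n).trans (degreeLTEquiv Fq n).toEquiv)).trans
    (by simp)

theorem filter_dvd_monicsOfNatDegree {a : Fq[X]} (ha : a.Monic) {n : ℕ} (hn : a.natDegree ≤ n) :
    {g ∈ monicsOfNatDegree Fq n | a ∣ g} =
      (monicsOfNatDegree Fq (n - a.natDegree)).image (a * ·) := by
  ext g
  simp only [mem_filter, mem_monicsOfNatDegree, mem_image]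
  constructor
  · rintro ⟨⟨hg, rfl⟩, b, rfl⟩
    have hb := ha.of_mul_monic_left hg
    exact ⟨b, ⟨hb, by rw [natDegree_mul ha.ne_zero hb.ne_zero]; omega⟩, rfl⟩
  · rintro ⟨b, ⟨hb, hbn⟩, rfl⟩
    refine ⟨⟨ha.mul hb, ?_⟩, dvd_mul_right a b⟩
    rw [natDegree_mul ha.ne_zero hb.ne_zero]
    omega

theorem card_filter_dvd_monicsOfNatDegree {a : Fq[X]} (ha : a.Monic) {n : ℕ}
    (hn : a.natDegree ≤ n) :
    #{g ∈ monicsOfNatDegree Fq n | a ∣ g} = Fintype.card Fq ^ (n - a.natDegree) := by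
  rw [filter_dvd_monicsOfNatDegree ha hn,
    card_image_of_injective _ (mul_right_injective₀ ha.ne_zero), card_monicsOfNatDegree]

theorem filter_dvd_monicsOfNatDegree_eq_empty {a : Fq[X]} {n : ℕ} (hn : n < a.natDegree) :
    {g ∈ monicsOfNatDegree Fq n | a ∣ g} = ∅ :=
  filter_eq_empty_iff.mpr fun g hg hdvd => by
    obtain ⟨hmonic, rfl⟩ := mem_monicsOfNatDegree.mp hg
    exact absurd (natDegree_le_of_dvd hdvd hmonic.ne_zero) (not_le.mpr hn)

theorem add_mem_monicsOfNatDegree {f h : Fq[X]} {n : ℕ} (hf : f ∈ monicsOfNatDegree Fq n)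
    (hh : h.natDegree < n) : f + h ∈ monicsOfNatDegree Fq n := by
  obtain ⟨hmonic, rfl⟩ := mem_monicsOfNatDegree.mp hf
  have hlt := degree_lt_degree hh
  exact mem_monicsOfNatDegree.mpr
    ⟨hmonic.add_of_left hlt, natDegree_add_eq_left_of_degree_lt hlt⟩

theorem sum_monicsOfNatDegree_add {M : Type*} [AddCommMonoid M] {h : Fq[X]} {n : ℕ}
    (hh : h.natDegree < n) (F : Fq[X] → M) :
    ∑ f ∈ monicsOfNatDegree Fq n, F (f + h) = ∑ g ∈ monicsOfNatDegree Fq n, F g :=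
  sum_nbij' (· + h) (· - h) (fun _ hf => add_mem_monicsOfNatDegree hf hh)
    (fun _ hg => sub_eq_add_neg _ h ▸ add_mem_monicsOfNatDegree hg (by rwa [natDegree_neg]))
    (fun _ _ => add_sub_cancel_right _ _) (fun _ _ => sub_add_cancel _ _) fun _ _ => rfl

end Monics

section Irreducible

variable {K : Type*} [Field K]

theorem isCoprime_pow_of_monic_irreducible {P Q : K[X]} (hP : P.Monic) (hQ : Q.Monic)
    (hPi : Irreducible P) (hQi : Irreducible Q) (hne : P ≠ Q) (a b : ℕ) :
    IsCoprime (P ^ a) (Q ^ b) :=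
  IsCoprime.pow <| hPi.coprime_iff_not_dvd.mpr fun hdvd =>
    hne (eq_of_monic_of_associated hP hQ (hPi.associated_of_dvd hQi hdvd))

end Irreducible

end Polynomial

namespace TuranKubilius

section ExactDvd

variable {R : Type*} [Monoid R]

def ExactDvd (s : R × ℕ) (g : R) : Prop :=
  s.1 ^ s.2 ∣ g ∧ ¬s.1 ^ (s.2 + 1) ∣ g

noncomputable def dvdInd (a g : R) : ℝ :=
  if a ∣ g then 1 else 0

noncomputable def exactDvdInd (s : R × ℕ) (g : R) : ℝ :=
  if ExactDvd s g then 1 else 0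

theorem ExactDvd.eq_of_fst_eq {s t : R × ℕ} {g : R} (hs : ExactDvd s g) (ht : ExactDvd t g)
    (h : s.1 = t.1) : s = t := by
  have hst := (emultiplicity_eq_coe.mpr hs).symm
  rw [h, emultiplicity_eq_coe.mpr ht] at hst
  exact Prod.ext h (by exact_mod_cast hst)

theorem exactDvdInd_nonneg (s : R × ℕ) (g : R) : 0 ≤ exactDvdInd s g := by
  unfold exactDvdInd; split_ifs <;> norm_num

theorem exactDvdInd_mul_self (s : R × ℕ) (g : R) :
    exactDvdInd s g * exactDvdInd s g = exactDvdInd s g := by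
  unfold exactDvdInd; split_ifs <;> norm_num

theorem exactDvdInd_mul_of_fst_eq {s t : R × ℕ} (hne : s ≠ t) (h : s.1 = t.1) (g : R) :
    exactDvdInd s g * exactDvdInd t g = 0 := by
  unfold exactDvdInd
  split_ifs with hs ht
  exacts [absurd (hs.eq_of_fst_eq ht h) hne, mul_zero _, zero_mul _, zero_mul _]

theorem exactDvdInd_eq_sub (s : R × ℕ) (g : R) :
    exactDvdInd s g = dvdInd (s.1 ^ s.2) g - dvdInd (s.1 ^ (s.2 + 1)) g := by
  have hmono : s.1 ^ (s.2 + 1) ∣ g → s.1 ^ s.2 ∣ g := (pow_dvd_pow _ s.2.le_succ).trans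
  unfold exactDvdInd dvdInd ExactDvd
  by_cases h : s.1 ^ (s.2 + 1) ∣ g <;> simp [h, hmono]

theorem exactDvdInd_le_dvdInd (s : R × ℕ) (g : R) :
    exactDvdInd s g ≤ dvdInd (s.1 ^ s.2) g := by
  rw [exactDvdInd_eq_sub, sub_le_self_iff]
  unfold dvdInd; split_ifs <;> norm_num

theorem dvdInd_mul_dvdInd {R : Type*} [CommSemiring R] {a b : R} (h : IsCoprime a b) (g : R) :
    dvdInd a g * dvdInd b g = dvdInd (a * b) g := by
  unfold dvdInd
  by_cases hab : a * b ∣ g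
  · simp [hab, (dvd_mul_right a b).trans hab, (dvd_mul_left b a).trans hab]
  · have : ¬(a ∣ g ∧ b ∣ g) := fun ⟨ha, hb⟩ => hab (h.mul_dvd ha hb)
    by_cases ha : a ∣ g <;> simp_all

end ExactDvd

section Factorization

variable {K : Type*} [Field K]

theorem exactExp_eq_iff {g P : K[X]} (hg : g ≠ 0) (hP : P.Monic) (hPi : Irreducible P) {m : ℕ} :
    exactExp g P = m ↔ ExactDvd (P, m) g := by
  rw [ExactDvd, ← emultiplicity_eq_coe,
    UniqueFactorizationMonoid.emultiplicity_eq_count_normalizedFactors hPi hg,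
    hP.normalize_eq_self, exactExp, Nat.cast_inj]

theorem sum_mul_natDegree_le_natDegree {g : K[X]} (hg : g ≠ 0)
    {U : Finset (K[X] × ℕ)} (hU : ∀ s ∈ U, s.1.Monic ∧ Irreducible s.1 ∧ ExactDvd s g) :
    ∑ s ∈ U, s.2 * s.1.natDegree ≤ g.natDegree := by
  have hcop : (U : Set (K[X] × ℕ)).Pairwise (Function.onFun IsCoprime fun s => s.1 ^ s.2) :=
    fun s hs t ht hst => isCoprime_pow_of_monic_irreducible (hU s hs).1 (hU t ht).1
      (hU s hs).2.1 (hU t ht).2.1 (fun h => hst ((hU s hs).2.2.eq_of_fst_eq (hU t ht).2.2 h)) _ _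
  have hdvd := prod_dvd_of_coprime hcop fun s hs => (hU s hs).2.2.1
  calc ∑ s ∈ U, s.2 * s.1.natDegree = (∏ s ∈ U, s.1 ^ s.2).natDegree := by
        rw [natDegree_prod _ _ fun s hs => pow_ne_zero _ (hU s hs).1.ne_zero]
        simp only [natDegree_pow]
    _ ≤ g.natDegree := natDegree_le_of_dvd hdvd hg

end Factorization

section FiniteField

variable {Fq : Type*} [Field Fq] [Fintype Fq] {n : ℕ}

local notation "q" => (Fintype.card Fq : ℝ)

theorem sum_dvdInd_eq {a : Fq[X]} (ha : a.Monic) (hn : a.natDegree ≤ n) :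
    ∑ g ∈ monicsOfNatDegree Fq n, dvdInd a g = q ^ n / q ^ a.natDegree := by
  simp only [dvdInd, sum_boole, card_filter_dvd_monicsOfNatDegree ha hn]
  rw [Nat.cast_pow, pow_sub₀ _ (by positivity) hn, div_eq_mul_inv]

theorem sum_dvdInd_le {a : Fq[X]} (ha : a.Monic) :
    ∑ g ∈ monicsOfNatDegree Fq n, dvdInd a g ≤ q ^ n / q ^ a.natDegree := by
  rcases le_or_gt a.natDegree n with hn | hn
  · exact (sum_dvdInd_eq ha hn).le
  · simp only [dvdInd, sum_boole, filter_dvd_monicsOfNatDegree_eq_empty hn, card_empty,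
      Nat.cast_zero]
    positivity

theorem sum_dvdInd_mul_dvdInd {a b : Fq[X]} (ha : a.Monic) (hb : b.Monic) (hab : IsCoprime a b)
    (hn : a.natDegree + b.natDegree ≤ n) :
    ∑ g ∈ monicsOfNatDegree Fq n, dvdInd a g * dvdInd b g =
      q ^ n / q ^ a.natDegree / q ^ b.natDegree := by
  simp only [dvdInd_mul_dvdInd hab]
  rw [sum_dvdInd_eq (ha.mul hb) (by rwa [natDegree_mul ha.ne_zero hb.ne_zero]),
    natDegree_mul ha.ne_zero hb.ne_zero, pow_add, div_div]

-- The proportion of `g ∈ M_n` with `P^m ∥ g`, attained exactly once `(m + 1) deg P ≤ n`.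
noncomputable def density (s : Fq[X] × ℕ) : ℝ :=
  (q ^ (s.2 * s.1.natDegree))⁻¹ * (1 - (q ^ s.1.natDegree)⁻¹)

theorem density_eq_sub (s : Fq[X] × ℕ) :
    density s = 1 / q ^ (s.1 ^ s.2).natDegree - 1 / q ^ (s.1 ^ (s.2 + 1)).natDegree := by
  rw [density, natDegree_pow, natDegree_pow, add_one_mul, pow_add]
  field_simp

theorem density_nonneg (s : Fq[X] × ℕ) : 0 ≤ density s :=
  mul_nonneg (by positivity) <| sub_nonneg.mpr <|
    inv_le_one_of_one_le₀ (one_le_pow₀ (by exact_mod_cast Fintype.card_pos))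

theorem density_le (s : Fq[X] × ℕ) : density s ≤ 1 / q ^ (s.2 * s.1.natDegree) := by
  rw [density, one_div]
  exact mul_le_of_le_one_right (by positivity) (sub_le_self _ (by positivity))

theorem sum_exactDvdInd_eq {s : Fq[X] × ℕ} (hs : s.1.Monic)
    (hn : (s.2 + 1) * s.1.natDegree ≤ n) :
    ∑ g ∈ monicsOfNatDegree Fq n, exactDvdInd s g = q ^ n * density s := by
  simp only [exactDvdInd_eq_sub, sum_sub_distrib]
  rw [sum_dvdInd_eq (hs.pow s.2) (by rw [natDegree_pow]; nlinarith),
    sum_dvdInd_eq (hs.pow (s.2 + 1)) (by rwa [natDegree_pow]), density_eq_sub]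
  ring

theorem le_sum_exactDvdInd {s : Fq[X] × ℕ} (hs : s.1.Monic) (hn : s.2 * s.1.natDegree ≤ n) :
    q ^ n * density s ≤ ∑ g ∈ monicsOfNatDegree Fq n, exactDvdInd s g := by
  simp only [exactDvdInd_eq_sub, sum_sub_distrib]
  rw [sum_dvdInd_eq (hs.pow _) (by rwa [natDegree_pow]), density_eq_sub, mul_sub, mul_one_div,
    mul_one_div]
  exact sub_le_sub_left (sum_dvdInd_le (hs.pow _)) _

theorem sum_exactDvdInd_le {s : Fq[X] × ℕ} (hs : s.1.Monic) :
    ∑ g ∈ monicsOfNatDegree Fq n, exactDvdInd s g ≤ q ^ n / q ^ (s.2 * s.1.natDegree) := by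
  rw [← natDegree_pow]
  exact (sum_le_sum fun g _ => exactDvdInd_le_dvdInd s g).trans (sum_dvdInd_le (hs.pow _))

theorem sum_exactDvdInd_mul_of_fst_ne {s t : Fq[X] × ℕ} (hs : s.1.Monic) (ht : t.1.Monic)
    (hsi : Irreducible s.1) (hti : Irreducible t.1) (hne : s.1 ≠ t.1)
    (hn : (s.2 + 1) * s.1.natDegree + (t.2 + 1) * t.1.natDegree ≤ n) :
    ∑ g ∈ monicsOfNatDegree Fq n, exactDvdInd s g * exactDvdInd t g =
      q ^ n * density s * density t := by
  have hcop := isCoprime_pow_of_monic_irreducible hs ht hsi hti hne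
  have hdeg (i j : ℕ) (hi : i ≤ s.2 + 1) (hj : j ≤ t.2 + 1) :
      (s.1 ^ i).natDegree + (t.1 ^ j).natDegree ≤ n := by
    rw [natDegree_pow, natDegree_pow]
    nlinarith
  simp only [exactDvdInd_eq_sub, sub_mul, mul_sub, sum_sub_distrib]
  rw [sum_dvdInd_mul_dvdInd (hs.pow _) (ht.pow _) (hcop _ _) (hdeg _ _ le_rfl le_rfl),
    sum_dvdInd_mul_dvdInd (hs.pow _) (ht.pow _) (hcop _ _) (hdeg _ _ le_rfl t.2.le_succ),
    sum_dvdInd_mul_dvdInd (hs.pow _) (ht.pow _) (hcop _ _) (hdeg _ _ s.2.le_succ le_rfl),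
    sum_dvdInd_mul_dvdInd (hs.pow _) (ht.pow _) (hcop _ _) (hdeg _ _ s.2.le_succ t.2.le_succ),
    density_eq_sub, density_eq_sub]
  ring

theorem sum_exactDvdInd_le_three {g : Fq[X]} (hg : g ∈ monicsOfNatDegree Fq n)
    {B : Finset (Fq[X] × ℕ)}
    (hB : ∀ s ∈ B, s.1.Monic ∧ Irreducible s.1 ∧ n < 4 * (s.2 * s.1.natDegree)) :
    ∑ s ∈ B, exactDvdInd s g ≤ 3 := by
  obtain ⟨hgm, rfl⟩ := mem_monicsOfNatDegree.mp hg
  have hdeg := sum_mul_natDegree_le_natDegree hgm.ne_zero (U := {s ∈ B | ExactDvd s g})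
    fun s hs => ⟨(hB s (mem_filter.mp hs).1).1, (hB s (mem_filter.mp hs).1).2.1,
      (mem_filter.mp hs).2⟩
  have hcard := card_nsmul_le_sum {s ∈ B | ExactDvd s g} (fun s => 4 * (s.2 * s.1.natDegree))
    (g.natDegree + 1) fun s hs => (hB s (mem_filter.mp hs).1).2.2
  rw [smul_eq_mul, ← mul_sum] at hcard
  have : #{s ∈ B | ExactDvd s g} ≤ 3 := by nlinarith
  simp only [exactDvdInd, sum_boole]
  exact_mod_cast this

variable (Fq) in
theorem finite_setOf_primePow (n : ℕ) :
    {s : Fq[X] × ℕ | s.1.Monic ∧ Irreducible s.1 ∧ 1 ≤ s.2 ∧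
      s.2 * s.1.natDegree ≤ n}.Finite := by
  refine (((Set.finite_Iic n).biUnion fun d _ => finite_setOf_monic_natDegree_eq (Fq := Fq) d).prod
    (Set.finite_Iic n)).subset ?_
  rintro ⟨P, m⟩ ⟨hP, hPi, hm, hmn⟩
  have hd := hPi.natDegree_pos
  simp only [Set.mem_prod, Set.mem_iUnion, Set.mem_Iic, Set.mem_ofPred_eq]
  exact ⟨⟨P.natDegree, by nlinarith, hP, rfl⟩, by nlinarith⟩

variable (Fq) in
noncomputable def primePowPairs (n : ℕ) : Finset (Fq[X] × ℕ) :=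
  (finite_setOf_primePow Fq n).toFinset

@[simp]
theorem mem_primePowPairs {s : Fq[X] × ℕ} :
    s ∈ primePowPairs Fq n ↔
      s.1.Monic ∧ Irreducible s.1 ∧ 1 ≤ s.2 ∧ s.2 * s.1.natDegree ≤ n := by
  simp [primePowPairs]

theorem finsum_exactExp_eq_sum {g : Fq[X]} (hg : g ∈ monicsOfNatDegree Fq n)
    (ψ : Fq[X] → ℕ → ℂ) :
    ∑ᶠ P ∈ {P : Fq[X] | P.Monic ∧ Irreducible P ∧ P ∣ g}, ψ P (exactExp g P) =
      ∑ s ∈ primePowPairs Fq n, ψ s.1 s.2 * (exactDvdInd s g : ℂ) := by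
  obtain ⟨hgm, rfl⟩ := mem_monicsOfNatDegree.mp hg
  have hset : {P : Fq[X] | P.Monic ∧ Irreducible P ∧ P ∣ g} =
      ↑({s ∈ primePowPairs Fq g.natDegree | ExactDvd s g}.image Prod.fst) := by
    ext P
    simp only [Set.mem_ofPred_eq, coe_image, coe_filter, mem_primePowPairs, Set.mem_image,
      Prod.exists, exists_and_right, exists_eq_right]
    constructor
    · rintro ⟨hP, hPi, hdvd⟩
      have hexact := (exactExp_eq_iff hgm.ne_zero hP hPi).mp rfl
      refine ⟨exactExp g P, ⟨hP, hPi, ?_, ?_⟩, hexact⟩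
      · by_contra h0
        exact hexact.2 (by simpa [Nat.lt_one_iff.mp (not_le.mp h0)] using hdvd)
      · simpa only [natDegree_pow] using natDegree_le_of_dvd hexact.1 hgm.ne_zero
    · rintro ⟨m, ⟨hP, hPi, hm, -⟩, hexact⟩
      exact ⟨hP, hPi, (dvd_pow_self P (by omega)).trans hexact.1⟩
  rw [hset, finsum_mem_coe_finset,
    sum_image fun s hs t ht h => ExactDvd.eq_of_fst_eq (mem_filter.mp hs).2 (mem_filter.mp ht).2 h,
    sum_filter]
  refine sum_congr rfl fun s hs => ?_
  obtain ⟨hP, hPi, -⟩ := mem_primePowPairs.mp hs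
  by_cases hexact : ExactDvd s g
  · simp [hexact, exactDvdInd, (exactExp_eq_iff hgm.ne_zero hP hPi).mpr hexact]
  · simp [hexact, exactDvdInd]

noncomputable def deviation (A : Finset (Fq[X] × ℕ)) (φ : Fq[X] × ℕ → ℝ) (g : Fq[X]) :
    ℝ :=
  ∑ s ∈ A, φ s * (exactDvdInd s g - density s)

theorem sum_exactDvdInd_sub_density_mul {s t : Fq[X] × ℕ}
    (hs : s.1.Monic ∧ Irreducible s.1 ∧ 2 * ((s.2 + 1) * s.1.natDegree) ≤ n)
    (ht : t.1.Monic ∧ Irreducible t.1 ∧ 2 * ((t.2 + 1) * t.1.natDegree) ≤ n) :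
    ∑ g ∈ monicsOfNatDegree Fq n,
        (exactDvdInd s g - density s) * (exactDvdInd t g - density t) =
      q ^ n * ((if s = t then density s else 0) -
        if s.1 = t.1 then density s * density t else 0) := by
  have hmean {u : Fq[X] × ℕ} (hu : u.1.Monic) (hun : (u.2 + 1) * u.1.natDegree ≤ n) :
      ∑ g ∈ monicsOfNatDegree Fq n, exactDvdInd u g =
        #(monicsOfNatDegree Fq n) * density u := by
    rw [sum_exactDvdInd_eq hu hun, card_monicsOfNatDegree, Nat.cast_pow]
  rw [sum_sub_mul_sub_of_sum_eq _ (hmean hs.1 (by omega)) (hmean ht.1 (by omega)),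
    card_monicsOfNatDegree, Nat.cast_pow]
  by_cases hst : s = t
  · subst hst
    simp only [exactDvdInd_mul_self, sum_exactDvdInd_eq hs.1 (by omega : _ ≤ n), if_true]
    ring
  by_cases hfst : s.1 = t.1
  · simp [exactDvdInd_mul_of_fst_eq hst hfst, hst, hfst, mul_assoc]
  · rw [sum_exactDvdInd_mul_of_fst_ne hs.1 ht.1 hs.2.1 ht.2.1 hfst (by omega)]
    simp [hst, hfst]

theorem sum_sq_deviation_le_of_small {A : Finset (Fq[X] × ℕ)}
    (hA : ∀ s ∈ A, s.1.Monic ∧ Irreducible s.1 ∧ 2 * ((s.2 + 1) * s.1.natDegree) ≤ n)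
    (φ : Fq[X] × ℕ → ℝ) :
    ∑ g ∈ monicsOfNatDegree Fq n, deviation A φ g ^ 2 ≤
      q ^ n * ∑ s ∈ A, φ s ^ 2 * density s := by
  have hpair : ∀ s ∈ A, ∀ t ∈ A, φ s * φ t * ∑ g ∈ monicsOfNatDegree Fq n,
      (exactDvdInd s g - density s) * (exactDvdInd t g - density t) =
        q ^ n * (if s = t then φ s ^ 2 * density s else 0) -
          q ^ n * (if s.1 = t.1 then (φ s * density s) * (φ t * density t) else 0) := by
    intro s hs t ht
    rw [sum_exactDvdInd_sub_density_mul (hA s hs) (hA t ht)]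
    split_ifs with h1 h2 <;> (try subst h1) <;> ring
  simp only [deviation]
  rw [sum_sq_sum_mul_eq_sum_sum,
    sum_congr rfl fun s hs => sum_congr rfl fun t ht => hpair s hs t ht]
  simp only [sum_sub_distrib, ← mul_sum, sum_ite_eq]
  rw [sum_congr rfl fun s hs => if_pos hs]
  -- the same-prime terms form a positive semidefinite quadratic form in `φ s * density s`
  exact sub_le_self _
    (mul_nonneg (by positivity) (sum_sum_ite_eq_mul_nonneg A Prod.fst fun s => φ s * density s))

theorem sum_density_le_three {B : Finset (Fq[X] × ℕ)}
    (hB : ∀ s ∈ B, s.1.Monic ∧ Irreducible s.1 ∧ n < 4 * (s.2 * s.1.natDegree) ∧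
      s.2 * s.1.natDegree ≤ n) :
    ∑ s ∈ B, density s ≤ 3 := by
  have hqn : 0 < q ^ n := by have := Fintype.card_pos (α := Fq); positivity
  refine le_of_mul_le_mul_left ?_ hqn
  calc q ^ n * ∑ s ∈ B, density s
      ≤ ∑ s ∈ B, ∑ g ∈ monicsOfNatDegree Fq n, exactDvdInd s g := by
        rw [mul_sum]
        exact sum_le_sum fun s hs => le_sum_exactDvdInd (hB s hs).1 (hB s hs).2.2.2
    _ ≤ ∑ _g ∈ monicsOfNatDegree Fq n, (3 : ℝ) := by
        rw [sum_comm]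
        exact sum_le_sum fun g hg => sum_exactDvdInd_le_three hg fun s hs =>
          ⟨(hB s hs).1, (hB s hs).2.1, (hB s hs).2.2.1⟩
    _ = q ^ n * 3 := by rw [sum_const, card_monicsOfNatDegree, nsmul_eq_mul, Nat.cast_pow, mul_comm]

theorem sum_sq_sum_exactDvdInd_mul_le {B : Finset (Fq[X] × ℕ)}
    (hB : ∀ s ∈ B, s.1.Monic ∧ Irreducible s.1 ∧ n < 4 * (s.2 * s.1.natDegree))
    (φ : Fq[X] × ℕ → ℝ) :
    ∑ g ∈ monicsOfNatDegree Fq n, (∑ s ∈ B, exactDvdInd s g * φ s) ^ 2 ≤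
      3 * (q ^ n * ∑ s ∈ B, φ s ^ 2 / q ^ (s.2 * s.1.natDegree)) :=
  calc ∑ g ∈ monicsOfNatDegree Fq n, (∑ s ∈ B, exactDvdInd s g * φ s) ^ 2
      ≤ ∑ g ∈ monicsOfNatDegree Fq n, 3 * ∑ s ∈ B, exactDvdInd s g * φ s ^ 2 :=
        sum_le_sum fun g hg =>
          (sq_sum_mul_le_sum_mul_sum_sq B (fun s _ => exactDvdInd_nonneg s g) φ).trans
            (mul_le_mul_of_nonneg_right (sum_exactDvdInd_le_three hg hB)
              (sum_nonneg fun s _ => mul_nonneg (exactDvdInd_nonneg s g) (sq_nonneg _)))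
    _ = 3 * ∑ s ∈ B, (∑ g ∈ monicsOfNatDegree Fq n, exactDvdInd s g) * φ s ^ 2 := by
        rw [← mul_sum, sum_comm]
        simp_rw [sum_mul]
    _ ≤ 3 * ∑ s ∈ B, q ^ n / q ^ (s.2 * s.1.natDegree) * φ s ^ 2 := by
        gcongr with s hs
        exact sum_exactDvdInd_le (hB s hs).1
    _ = 3 * (q ^ n * ∑ s ∈ B, φ s ^ 2 / q ^ (s.2 * s.1.natDegree)) := by
        rw [mul_sum B _ (q ^ n)]
        exact congrArg (3 * ·) (sum_congr rfl fun s _ => by ring)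

theorem sum_sq_deviation_le_of_large {B : Finset (Fq[X] × ℕ)}
    (hB : ∀ s ∈ B, s.1.Monic ∧ Irreducible s.1 ∧ n < 4 * (s.2 * s.1.natDegree) ∧
      s.2 * s.1.natDegree ≤ n)
    (φ : Fq[X] × ℕ → ℝ) :
    ∑ g ∈ monicsOfNatDegree Fq n, deviation B φ g ^ 2 ≤
      12 * q ^ n * ∑ s ∈ B, φ s ^ 2 / q ^ (s.2 * s.1.natDegree) := by
  set T := ∑ s ∈ B, φ s ^ 2 / q ^ (s.2 * s.1.natDegree)
  have hexact := sum_sq_sum_exactDvdInd_mul_le (fun s hs => ⟨(hB s hs).1, (hB s hs).2.1,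
    (hB s hs).2.2.1⟩) φ
  have hmean : (∑ s ∈ B, density s * φ s) ^ 2 ≤ 3 * T := by
    refine (sq_sum_mul_le_sum_mul_sum_sq B (fun s _ => density_nonneg s) φ).trans
      (mul_le_mul (sum_density_le_three hB) (sum_le_sum fun s _ => ?_)
        (sum_nonneg fun s _ => mul_nonneg (density_nonneg s) (sq_nonneg _)) (by norm_num))
    rw [mul_comm, ← mul_one_div]
    exact mul_le_mul_of_nonneg_left (density_le s) (sq_nonneg _)
  have hdev (g : Fq[X]) : deviation B φ g =
      ∑ s ∈ B, exactDvdInd s g * φ s - ∑ s ∈ B, density s * φ s := by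
    rw [deviation, ← sum_sub_distrib]
    exact sum_congr rfl fun s _ => by ring
  calc ∑ g ∈ monicsOfNatDegree Fq n, deviation B φ g ^ 2
      ≤ ∑ g ∈ monicsOfNatDegree Fq n, 2 * ((∑ s ∈ B, exactDvdInd s g * φ s) ^ 2 +
          (∑ s ∈ B, density s * φ s) ^ 2) :=
        sum_le_sum fun g _ => by
          rw [hdev, sub_eq_add_neg, ← neg_sq (∑ s ∈ B, density s * φ s)]
          exact add_sq_le
    _ = 2 * ∑ g ∈ monicsOfNatDegree Fq n, (∑ s ∈ B, exactDvdInd s g * φ s) ^ 2 +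
          2 * q ^ n * (∑ s ∈ B, density s * φ s) ^ 2 := by
        rw [← mul_sum, sum_add_distrib, sum_const, card_monicsOfNatDegree, nsmul_eq_mul,
          Nat.cast_pow]
        ring
    _ ≤ 2 * (3 * (q ^ n * T)) + 2 * q ^ n * (3 * T) := by gcongr
    _ = 12 * q ^ n * T := by ring

theorem sum_sq_deviation_le (φ : Fq[X] × ℕ → ℝ) :
    ∑ g ∈ monicsOfNatDegree Fq n, deviation (primePowPairs Fq n) φ g ^ 2 ≤
      24 * q ^ n * ∑ s ∈ primePowPairs Fq n, φ s ^ 2 / q ^ (s.2 * s.1.natDegree) := by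
  set S := primePowPairs Fq n
  set small := {s ∈ S | 4 * (s.2 * s.1.natDegree) ≤ n}
  set large := {s ∈ S | ¬4 * (s.2 * s.1.natDegree) ≤ n}
  have hsplit (g : Fq[X]) : deviation S φ g = deviation small φ g + deviation large φ g :=
    (sum_filter_add_sum_filter_not _ _ _).symm
  have hsmall := sum_sq_deviation_le_of_small (A := small) (fun s hs => by
    obtain ⟨hs, h4⟩ := mem_filter.mp hs
    obtain ⟨hP, hPi, hm, -⟩ := mem_primePowPairs.mp hs
    exact ⟨hP, hPi, by nlinarith⟩) φ
  have hlarge := sum_sq_deviation_le_of_large (B := large) (fun s hs => by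
    obtain ⟨hs, h4⟩ := mem_filter.mp hs
    obtain ⟨hP, hPi, -, hmn⟩ := mem_primePowPairs.mp hs
    exact ⟨hP, hPi, not_le.mp h4, hmn⟩) φ
  have hdensity : ∑ s ∈ small, φ s ^ 2 * density s ≤
      ∑ s ∈ small, φ s ^ 2 / q ^ (s.2 * s.1.natDegree) := sum_le_sum fun s _ => by
    rw [← mul_one_div]
    exact mul_le_mul_of_nonneg_left (density_le s) (sq_nonneg _)
  have hq : 0 ≤ q ^ n := by positivity
  have hnonneg : 0 ≤ ∑ s ∈ small, φ s ^ 2 / q ^ (s.2 * s.1.natDegree) :=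
    sum_nonneg fun s _ => by positivity
  calc ∑ g ∈ monicsOfNatDegree Fq n, deviation S φ g ^ 2
      ≤ ∑ g ∈ monicsOfNatDegree Fq n,
          2 * (deviation small φ g ^ 2 + deviation large φ g ^ 2) :=
        sum_le_sum fun g _ => by rw [hsplit]; exact add_sq_le
    _ ≤ 2 * (q ^ n * ∑ s ∈ small, φ s ^ 2 / q ^ (s.2 * s.1.natDegree)) +
          2 * (12 * q ^ n * ∑ s ∈ large, φ s ^ 2 / q ^ (s.2 * s.1.natDegree)) := by
        rw [← mul_sum, sum_add_distrib, mul_add]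
        gcongr
        exact hsmall.trans (mul_le_mul_of_nonneg_left hdensity hq)
    _ ≤ 24 * q ^ n * ∑ s ∈ S, φ s ^ 2 / q ^ (s.2 * s.1.natDegree) := by
        rw [← sum_filter_add_sum_filter_not S fun s => 4 * (s.2 * s.1.natDegree) ≤ n]
        nlinarith

theorem sum_sq_norm_deviation_le (ψ : Fq[X] × ℕ → ℂ) :
    ∑ g ∈ monicsOfNatDegree Fq n,
        ‖∑ s ∈ primePowPairs Fq n,
            ψ s * ((exactDvdInd s g - density s : ℝ) : ℂ)‖ ^ 2 ≤
      24 * q ^ n * ∑ s ∈ primePowPairs Fq n, ‖ψ s‖ ^ 2 / q ^ (s.2 * s.1.natDegree) := by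
  simp only [Complex.sq_norm_sum_mul_ofReal, sum_add_distrib]
  have hre := sum_sq_deviation_le (n := n) fun s => (ψ s).re
  have him := sum_sq_deviation_le (n := n) fun s => (ψ s).im
  simp only [deviation] at hre him
  refine (add_le_add hre him).trans_eq ?_
  rw [← mul_add, ← sum_add_distrib]
  congr 1
  refine sum_congr rfl fun s _ => ?_
  rw [Complex.sq_norm, Complex.normSq_apply]
  ring

end FiniteField

end TuranKubilius

open TuranKubilius

/-- **Shifted Turán–Kubilius inequality over 𝔽_q[x], L² form.**
For `h` of degree `< n` and arbitrary complex numbers `ψ(P^m)`,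
`∑_{f ∈ M_{n,q}} |∑_{P^m ∥ f+h} ψ(P^m) - ∑_{m deg P ≤ n} ψ(P^m) q^{-m deg P}(1 - q^{-deg P})|²
  ≪ q^n ∑_{m deg P ≤ n} |ψ(P^m)|² q^{-m deg P}`. -/
theorem turan_kubilius_L2 (Fq : Type*) [Field Fq] [Fintype Fq] :
    ∃ C : ℝ, 0 < C ∧ ∀ (n : ℕ) (h : Polynomial Fq), h.natDegree < n →
      ∀ ψ : Polynomial Fq → ℕ → ℂ,
      (∑ᶠ f ∈ {f : Polynomial Fq | f.Monic ∧ f.natDegree = n},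
        ‖(∑ᶠ P ∈ {P : Polynomial Fq | P.Monic ∧ Irreducible P ∧ P ∣ (f + h)},
            ψ P (exactExp (f + h) P)) -
          ∑ᶠ Pm ∈ {Pm : Polynomial Fq × ℕ |
              Pm.1.Monic ∧ Irreducible Pm.1 ∧ 1 ≤ Pm.2 ∧ Pm.2 * Pm.1.natDegree ≤ n},
            ψ Pm.1 Pm.2 * (((Fintype.card Fq : ℂ) ^ (Pm.2 * Pm.1.natDegree))⁻¹ *
              (1 - ((Fintype.card Fq : ℂ) ^ Pm.1.natDegree)⁻¹))‖ ^ 2) ≤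
      C * (Fintype.card Fq : ℝ) ^ n *
        ∑ᶠ Pm ∈ {Pm : Polynomial Fq × ℕ |
            Pm.1.Monic ∧ Irreducible Pm.1 ∧ 1 ≤ Pm.2 ∧ Pm.2 * Pm.1.natDegree ≤ n},
          ‖ψ Pm.1 Pm.2‖ ^ 2 / (Fintype.card Fq : ℝ) ^ (Pm.2 * Pm.1.natDegree) := by
  refine ⟨24, by norm_num, fun n h hh ψ => ?_⟩
  have hM : {f : Fq[X] | f.Monic ∧ f.natDegree = n} = monicsOfNatDegree Fq n := by ext; simp
  have hS : {s : Fq[X] × ℕ | s.1.Monic ∧ Irreducible s.1 ∧ 1 ≤ s.2 ∧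
      s.2 * s.1.natDegree ≤ n} = primePowPairs Fq n := by ext; simp
  rw [hM, hS, finsum_mem_coe_finset, finsum_mem_coe_finset, finsum_mem_coe_finset]
  calc _ = ∑ f ∈ monicsOfNatDegree Fq n, ‖∑ s ∈ primePowPairs Fq n,
          ψ s.1 s.2 * ((exactDvdInd s (f + h) - density s : ℝ) : ℂ)‖ ^ 2 := by
        refine sum_congr rfl fun f hf => ?_
        rw [finsum_exactExp_eq_sum (add_mem_monicsOfNatDegree hf hh), ← sum_sub_distrib]
        congr 2
        refine sum_congr rfl fun s _ => ?_
        simp only [density]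
        push_cast
        ring
    _ = ∑ g ∈ monicsOfNatDegree Fq n, ‖∑ s ∈ primePowPairs Fq n,
          ψ s.1 s.2 * ((exactDvdInd s g - density s : ℝ) : ℂ)‖ ^ 2 :=
        sum_monicsOfNatDegree_add hh fun g => ‖∑ s ∈ primePowPairs Fq n,
          ψ s.1 s.2 * ((exactDvdInd s g - density s : ℝ) : ℂ)‖ ^ 2
    _ ≤ _ := sum_sq_norm_deviation_le fun s => ψ s.1 s.2
end

section
/- Fix a ∈ F_q^*. Then for every 0 < B < 1, (1/q^n)·∑_{f ∈ M_{n,q}} Φ(f)·Φ(f+a)/(|f|·|f+a|) = ∏_{P monic irreducible} (1 − 2/q^{2·deg P}) + O(n^{−B}) as n → ∞. -/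
open scoped Classical
open Polynomial Filter Asymptotics

/-- The Euler totient on `𝔽_q[x]` (as a real number), via the product formula
`Φ(f) = |f| ∏_{P ∣ f} (1 - 1/|P|)` over monic irreducible divisors `P` of `f`. -/
noncomputable def PhiR {Fq : Type*} [Field Fq] [Fintype Fq] (f : Polynomial Fq) : ℝ :=
  (Fintype.card Fq : ℝ) ^ f.natDegree *
    ∏ᶠ P ∈ {P : Polynomial Fq | P.Monic ∧ Irreducible P ∧ P ∣ f},
      (1 - ((Fintype.card Fq : ℝ) ^ P.natDegree)⁻¹)

/-!
Write `Φ(f)/|f| = ∑_{d ∣ f} μ(d)/|d|` over squarefree monic `d`, encoded as finite sets `T` of monic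
irreducibles with `d = ∏ T`. The average becomes `∑_{d,e} μ(d)μ(e)/(|d||e|) · N_n(d,e)/q^n`, where
`N_n(d,e)` counts the `f ∈ M_{n,q}` with `d ∣ f` and `e ∣ f + a`. Since `a ≠ 0`, `N_n(d,e) = 0`
unless `d` and `e` are coprime, and then by the Chinese remainder theorem
`N_n(d,e) = q^(n - deg de)` if `deg de ≤ n` and `N_n(d,e) ≤ 1` otherwise. So the terms with
`deg d + deg e ≤ n` are exactly `μ(d)μ(e)/(|d|²|e|²)`, the terms of the absolutely convergent
expansion of `∏_P (1 - 2/|P|²)`, and all other terms add up to `O(n² q^(-n) + q^(-n/2))`. This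
decays exponentially, so it is `O(n^(-B))` for every `B`.
-/

open Finset

namespace PolynomialTotientCorrelation

lemma exists_forall_dvd_sub_and_dvd_sub_iff {R : Type*} [CommRing R] {m₁ m₂ : R}
    (h : IsCoprime m₁ m₂) (b₁ b₂ : R) :
    ∃ r, ∀ f, (m₁ ∣ f - b₁ ∧ m₂ ∣ f - b₂) ↔ m₁ * m₂ ∣ f - r := by
  have ⟨u, v, huv⟩ := h
  refine ⟨b₁ * (v * m₂) + b₂ * (u * m₁), fun f => ?_⟩
  have h₁ : m₁ ∣ f - (b₁ * (v * m₂) + b₂ * (u * m₁)) ↔ m₁ ∣ f - b₁ := by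
    rw [show f - (b₁ * (v * m₂) + b₂ * (u * m₁)) = f - b₁ + m₁ * (u * (b₁ - b₂)) by
      linear_combination -b₁ * huv, dvd_add_left (dvd_mul_right _ _)]
  have h₂ : m₂ ∣ f - (b₁ * (v * m₂) + b₂ * (u * m₁)) ↔ m₂ ∣ f - b₂ := by
    rw [show f - (b₁ * (v * m₂) + b₂ * (u * m₁)) = f - b₂ + m₂ * (v * (b₂ - b₁)) by
      linear_combination -b₂ * huv, dvd_add_left (dvd_mul_right _ _)]
  rw [← h₁, ← h₂]
  exact ⟨fun hd => h.mul_dvd hd.1 hd.2,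
    fun hd => ⟨dvd_of_mul_right_dvd hd, dvd_of_mul_left_dvd hd⟩⟩

lemma sum_mul_le_sum_image_fst_mul_sum_image_snd {α β : Type*} [DecidableEq α] [DecidableEq β]
    (u : Finset (α × β)) {φ : α → ℝ} {ψ : β → ℝ} (hφ : ∀ a, 0 ≤ φ a) (hψ : ∀ b, 0 ≤ ψ b) :
    ∑ p ∈ u, φ p.1 * ψ p.2 ≤ (∑ a ∈ u.image Prod.fst, φ a) * ∑ b ∈ u.image Prod.snd, ψ b := by
  rw [sum_mul_sum, ← sum_product']
  exact sum_le_sum_of_subset_of_nonneg subset_product fun p _ _ => mul_nonneg (hφ _) (hψ _)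

lemma isBigO_pow_mul_pow_rpow_neg (k : ℕ) {ρ : ℝ} (hρ₀ : 0 ≤ ρ) (hρ₁ : ρ < 1) (B : ℝ) :
    (fun n : ℕ => (n : ℝ) ^ k * ρ ^ n) =O[atTop] fun n => (n : ℝ) ^ (-B) := by
  have hlim := tendsto_pow_const_mul_const_pow_of_abs_lt_one (k + ⌈B⌉₊)
    (abs_lt.mpr ⟨by linarith, hρ₁⟩)
  refine IsBigO.of_bound 1 ?_
  filter_upwards [hlim.eventually (eventually_le_nhds one_pos), eventually_ge_atTop 1]
    with n hle hn
  have hn' : (1 : ℝ) ≤ n := by exact_mod_cast hn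
  have hpos : (0 : ℝ) < (n : ℝ) ^ ⌈B⌉₊ := by positivity
  rw [Real.norm_eq_abs, Real.norm_eq_abs, abs_of_nonneg (by positivity),
    abs_of_nonneg (by positivity), one_mul]
  calc (n : ℝ) ^ k * ρ ^ n = (n : ℝ) ^ (k + ⌈B⌉₊) * ρ ^ n / (n : ℝ) ^ ⌈B⌉₊ := by
        field_simp
        ring
    _ ≤ 1 / (n : ℝ) ^ ⌈B⌉₊ := div_le_div_of_nonneg_right hle hpos.le
    _ = (n : ℝ) ^ (-(⌈B⌉₊ : ℝ)) := by
        rw [Real.rpow_neg (by positivity), Real.rpow_natCast, one_div]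
    _ ≤ (n : ℝ) ^ (-B) := Real.rpow_le_rpow_of_exponent_le hn' (neg_le_neg (Nat.le_ceil B))

section DisjointPairs

variable {ι R : Type*} [CommRing R]

noncomputable def disjointPairTerm (v : ι → R) (p : Finset ι × Finset ι) : R :=
  if Disjoint p.1 p.2 then (∏ i ∈ p.1, -v i) * ∏ i ∈ p.2, -v i else 0

lemma prod_one_sub_two_mul_eq_sum (v : ι → R) (s : Finset ι) :
    ∏ i ∈ s, (1 - 2 * v i) = ∑ p ∈ s.powerset ×ˢ s.powerset, disjointPairTerm v p := by
  have hsplit : ∀ i ∈ s, 1 - 2 * v i = -v i + (1 + -v i) := fun _ _ => by ring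
  rw [prod_congr rfl hsplit, prod_add, sum_product]
  refine sum_congr rfl fun t _ => ?_
  have hdisj : (s \ t).powerset = {u ∈ s.powerset | Disjoint t u} := by
    ext u
    simp [subset_sdiff, disjoint_comm]
  simp only [disjointPairTerm, ← sum_filter, ← hdisj, prod_one_add, mul_sum]

lemma hasProd_one_sub_two_mul [TopologicalSpace R] {v : ι → R} {a : R}
    (h : HasSum (disjointPairTerm v) a) : HasProd (fun i => 1 - 2 * v i) a := by
  have hprod : (fun s : Finset ι => ∏ i ∈ s, (1 - 2 * v i)) =
      (fun u => ∑ p ∈ u, disjointPairTerm v p) ∘ fun s => s.powerset ×ˢ s.powerset :=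
    funext (prod_one_sub_two_mul_eq_sum v)
  rw [HasProd, hprod]
  refine h.comp (tendsto_atTop_finset_of_monotone ?_ fun p => ⟨p.1 ∪ p.2, ?_⟩)
  · exact fun s t hst => product_subset_product (powerset_mono.mpr hst) (powerset_mono.mpr hst)
  · exact mem_product.mpr ⟨mem_powerset.mpr subset_union_left, mem_powerset.mpr subset_union_right⟩

end DisjointPairs

section MonicsOfDegree

variable {K : Type*} [Field K] [Fintype K]

lemma finite_setOf_monic_natDegree_eq (n : ℕ) :
    {f : K[X] | f.Monic ∧ f.natDegree = n}.Finite :=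
  Set.finite_coe_iff.mp <|
    .of_equiv _ ((monicEquivDegreeLT n).trans (degreeLTEquiv K n).toEquiv).symm

variable (K) in
noncomputable def monicsOfDegree (n : ℕ) : Finset K[X] :=
  (finite_setOf_monic_natDegree_eq n).toFinset

lemma mem_monicsOfDegree {n : ℕ} {f : K[X]} :
    f ∈ monicsOfDegree K n ↔ f.Monic ∧ f.natDegree = n :=
  Set.Finite.mem_toFinset _

lemma card_monicsOfDegree (n : ℕ) : #(monicsOfDegree K n) = Fintype.card K ^ n := by
  rw [monicsOfDegree, ← Set.ncard_eq_toFinset_card _ (finite_setOf_monic_natDegree_eq n),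
    ← Nat.card_coe_set_eq]
  exact (Nat.card_congr ((monicEquivDegreeLT n).trans (degreeLTEquiv K n).toEquiv)).trans
    (by simp)

lemma add_C_mem_monicsOfDegree {n : ℕ} (hn : 1 ≤ n) {f : K[X]}
    (hf : f ∈ monicsOfDegree K n) (a : K) : f + C a ∈ monicsOfDegree K n := by
  obtain ⟨hmon, rfl⟩ := mem_monicsOfDegree.mp hf
  refine mem_monicsOfDegree.mpr ⟨hmon.add_of_left ?_, natDegree_add_C⟩
  exact degree_C_le.trans_lt (natDegree_pos_iff_degree_pos.mp hn)

lemma card_filter_dvd_sub_monicsOfDegree {m : K[X]} (hm : m.Monic) (r : K[X]) {n : ℕ}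
    (h : m.natDegree ≤ n) :
    #{f ∈ monicsOfDegree K n | m ∣ f - r} = Fintype.card K ^ (n - m.natDegree) := by
  have hr : r %ₘ m + m * (r /ₘ m) = r := modByMonic_add_div r m
  have hrm : (r %ₘ m).degree < m.degree := degree_modByMonic_lt r hm
  have hdvd : ∀ f, m ∣ f - r ↔ m ∣ f - r %ₘ m := fun f => by
    rw [show f - r %ₘ m = f - r + m * (r /ₘ m) by linear_combination -hr,
      dvd_add_left (dvd_mul_right _ _)]
  have himage : {f ∈ monicsOfDegree K n | m ∣ f - r} =
      (monicsOfDegree K (n - m.natDegree)).image (fun g => m * g + r %ₘ m) := by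
    ext f
    simp only [mem_filter, mem_image, mem_monicsOfDegree, hdvd]
    constructor
    · rintro ⟨⟨hf, rfl⟩, g, hg⟩
      have hlt : (r %ₘ m).degree < f.degree := hrm.trans_le <| by
        rw [degree_eq_natDegree hm.ne_zero, degree_eq_natDegree hf.ne_zero]
        exact_mod_cast h
      have hg' : g.Monic := hm.of_mul_monic_left (hg ▸ hf.sub_of_left hlt)
      refine ⟨g, ⟨hg', ?_⟩, by rw [← hg]; ring⟩
      have := congrArg natDegree hg
      rw [hm.natDegree_mul hg', natDegree_eq_of_degree_eq (degree_sub_eq_left_of_degree_lt hlt)]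
        at this
      omega
    · rintro ⟨g, ⟨hg, hgn⟩, rfl⟩
      have hlt : (r %ₘ m).degree < (m * g).degree :=
        hrm.trans_le (degree_le_mul_left m hg.ne_zero)
      refine ⟨⟨(hm.mul hg).add_of_left hlt, ?_⟩, g, by ring⟩
      rw [natDegree_add_eq_left_of_degree_lt hlt, hm.natDegree_mul hg]
      omega
  rw [himage, card_image_of_injective _
    fun g₁ g₂ h => mul_right_injective₀ hm.ne_zero (add_right_cancel h), card_monicsOfDegree]

lemma card_filter_dvd_sub_monicsOfDegree_le_one {m : K[X]} (r : K[X]) {n : ℕ}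
    (h : n < m.natDegree) : #{f ∈ monicsOfDegree K n | m ∣ f - r} ≤ 1 := by
  refine card_le_one.mpr fun f₁ hf₁ f₂ hf₂ => ?_
  simp only [mem_filter, mem_monicsOfDegree] at hf₁ hf₂
  refine sub_eq_zero.mp (eq_zero_of_dvd_of_natDegree_lt (p := m) ?_ ?_)
  · simpa using dvd_sub hf₁.2 hf₂.2
  · exact (natDegree_sub_le _ _).trans_lt (by omega)

end MonicsOfDegree

section PrimeProducts

variable (K : Type*) [Field K]

abbrev MonicIrreducible := {P : K[X] // P.Monic ∧ Irreducible P}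

variable {K}

namespace MonicIrreducible

lemma eq_of_dvd {P Q : MonicIrreducible K} (h : P.1 ∣ Q.1) : P = Q :=
  Subtype.ext (eq_of_monic_of_associated P.2.1 Q.2.1 (P.2.2.associated_of_dvd Q.2.2 h))

lemma isCoprime_of_ne {P Q : MonicIrreducible K} (h : P ≠ Q) : IsCoprime P.1 Q.1 :=
  P.2.2.coprime_iff_not_dvd.mpr fun hd => h (eq_of_dvd hd)

end MonicIrreducible

noncomputable def primeProd (T : Finset (MonicIrreducible K)) : K[X] := ∏ P ∈ T, P.1

lemma monic_primeProd (T : Finset (MonicIrreducible K)) : (primeProd T).Monic :=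
  monic_prod_of_monic _ _ fun P _ => P.2.1

lemma natDegree_primeProd (T : Finset (MonicIrreducible K)) :
    (primeProd T).natDegree = ∑ P ∈ T, P.1.natDegree :=
  natDegree_prod _ _ fun P _ => P.2.1.ne_zero

lemma natDegree_le_natDegree_primeProd {T : Finset (MonicIrreducible K)} {P : MonicIrreducible K}
    (hP : P ∈ T) : P.1.natDegree ≤ (primeProd T).natDegree :=
  natDegree_le_of_dvd (dvd_prod_of_mem _ hP) (monic_primeProd T).ne_zero

lemma primeProd_dvd_iff {T : Finset (MonicIrreducible K)} {f : K[X]} :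
    primeProd T ∣ f ↔ ∀ P ∈ T, P.1 ∣ f :=
  ⟨fun h _ hP => (dvd_prod_of_mem _ hP).trans h,
    prod_dvd_of_coprime fun _ _ _ _ hPQ => MonicIrreducible.isCoprime_of_ne hPQ⟩

lemma isCoprime_primeProd_of_disjoint {T U : Finset (MonicIrreducible K)} (h : Disjoint T U) :
    IsCoprime (primeProd T) (primeProd U) :=
  IsCoprime.prod_left fun _ hP => IsCoprime.prod_right fun _ hQ =>
    MonicIrreducible.isCoprime_of_ne (disjoint_left.mp h hP <| · ▸ hQ)

lemma mem_of_dvd_primeProd {T : Finset (MonicIrreducible K)} {P : MonicIrreducible K}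
    (h : P.1 ∣ primeProd T) : P ∈ T := by
  obtain ⟨Q, hQ, hPQ⟩ := (P.2.2.prime.dvd_finsetProd_iff _).mp h
  exact MonicIrreducible.eq_of_dvd hPQ ▸ hQ

lemma primeProd_injective : Function.Injective (primeProd (K := K)) := fun T U h => by
  ext P
  exact ⟨fun hP => mem_of_dvd_primeProd (h ▸ dvd_prod_of_mem _ hP),
    fun hP => mem_of_dvd_primeProd (h.symm ▸ dvd_prod_of_mem _ hP)⟩

variable (K) [Fintype K] in
noncomputable def monicIrreduciblesOfDegreeLE (n : ℕ) : Finset (MonicIrreducible K) :=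
  ((range (n + 1)).biUnion (monicsOfDegree K)).subtype _

lemma mem_monicIrreduciblesOfDegreeLE [Fintype K] {n : ℕ} {P : MonicIrreducible K} :
    P ∈ monicIrreduciblesOfDegreeLE K n ↔ P.1.natDegree ≤ n := by
  simp [monicIrreduciblesOfDegreeLE, mem_monicsOfDegree, P.2.1]

end PrimeProducts

section MobiusExpansion

variable {K : Type*} [Field K] [Fintype K]

/-- `μ(d)/|d|` for the squarefree `d = primeProd T`. -/
noncomputable def mobiusWeight (T : Finset (MonicIrreducible K)) : ℝ :=
  ∏ P ∈ T, -(Fintype.card K : ℝ)⁻¹ ^ P.1.natDegree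

lemma prod_inv_card_pow (T : Finset (MonicIrreducible K)) (k : ℕ) :
    ∏ P ∈ T, ((Fintype.card K : ℝ)⁻¹ ^ k) ^ P.1.natDegree =
      ((Fintype.card K : ℝ)⁻¹ ^ k) ^ (primeProd T).natDegree := by
  rw [prod_pow_eq_pow_sum, natDegree_primeProd]

lemma abs_mobiusWeight (T : Finset (MonicIrreducible K)) :
    |mobiusWeight T| = (Fintype.card K : ℝ)⁻¹ ^ (primeProd T).natDegree := by
  simpa [mobiusWeight, abs_prod] using prod_inv_card_pow T 1

lemma phiR_eq_sum {f : K[X]} {S : Finset (MonicIrreducible K)}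
    (hS : ∀ P : MonicIrreducible K, P.1 ∣ f → P ∈ S) :
    PhiR f = (Fintype.card K : ℝ) ^ f.natDegree *
      ∑ T ∈ S.powerset, if primeProd T ∣ f then mobiusWeight T else 0 := by
  have hdiv : {P : K[X] | P.Monic ∧ Irreducible P ∧ P ∣ f} =
      (Subtype.val : MonicIrreducible K → K[X]) '' ↑{P ∈ S | P.1 ∣ f} := by
    ext P
    constructor
    · rintro ⟨hm, hi, hd⟩
      exact ⟨⟨P, hm, hi⟩, mem_filter.mpr ⟨hS ⟨P, hm, hi⟩ hd, hd⟩, rfl⟩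
    · rintro ⟨Q, hQ, rfl⟩
      exact ⟨Q.2.1, Q.2.2, (mem_filter.mp hQ).2⟩
  have hpowerset : {T ∈ S.powerset | primeProd T ∣ f} = {P ∈ S | P.1 ∣ f}.powerset := by
    ext T
    simp only [mem_filter, mem_powerset, primeProd_dvd_iff, subset_iff]
    exact ⟨fun h P hP => ⟨h.1 hP, h.2 P hP⟩, fun h => ⟨fun P hP => (h hP).1, fun P hP => (h hP).2⟩⟩
  rw [PhiR, hdiv, finprod_mem_image Subtype.val_injective.injOn, finprod_mem_coe_finset,
    ← sum_filter, hpowerset]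
  simp only [mobiusWeight, sub_eq_add_neg, inv_pow, prod_one_add]

end MobiusExpansion

section Count

variable {K : Type*} [Field K] [Fintype K]

noncomputable def correlationCount (a : K) (n : ℕ)
    (p : Finset (MonicIrreducible K) × Finset (MonicIrreducible K)) : ℕ :=
  #{f ∈ monicsOfDegree K n | primeProd p.1 ∣ f ∧ primeProd p.2 ∣ f + C a}

variable {a : K} {n : ℕ} {p : Finset (MonicIrreducible K) × Finset (MonicIrreducible K)}

lemma correlationCount_eq_zero_of_not_disjoint (ha : a ≠ 0) (h : ¬Disjoint p.1 p.2) :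
    correlationCount a n p = 0 := by
  obtain ⟨P, hP₁, hP₂⟩ := not_disjoint_iff.mp h
  refine card_eq_zero.mpr (filter_eq_empty_iff.mpr fun f _ ⟨hf, hfa⟩ => ?_)
  have hPa : P.1 ∣ C a := by
    simpa using dvd_sub (primeProd_dvd_iff.mp hfa P hP₂) (primeProd_dvd_iff.mp hf P hP₁)
  exact P.2.2.not_isUnit (isUnit_of_dvd_unit hPa (isUnit_C.mpr ha.isUnit))

lemma exists_correlationCount_eq_card_filter_dvd_sub (h : Disjoint p.1 p.2) :
    ∃ r, correlationCount a n p =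
      #{f ∈ monicsOfDegree K n | primeProd p.1 * primeProd p.2 ∣ f - r} := by
  obtain ⟨r, hr⟩ :=
    exists_forall_dvd_sub_and_dvd_sub_iff (isCoprime_primeProd_of_disjoint h) 0 (-C a)
  refine ⟨r, congrArg card (filter_congr fun f _ => ?_)⟩
  simpa using hr f

lemma correlationCount_eq (ha : a ≠ 0)
    (h : (primeProd p.1).natDegree + (primeProd p.2).natDegree ≤ n) :
    correlationCount a n p = if Disjoint p.1 p.2 then
      Fintype.card K ^ (n - ((primeProd p.1).natDegree + (primeProd p.2).natDegree)) else 0 := by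
  split_ifs with hd
  · obtain ⟨r, hr⟩ := exists_correlationCount_eq_card_filter_dvd_sub (a := a) (n := n) hd
    have hm := (monic_primeProd p.1).mul (monic_primeProd p.2)
    rw [hr, card_filter_dvd_sub_monicsOfDegree hm r, (monic_primeProd p.1).natDegree_mul
      (monic_primeProd p.2)]
    rwa [(monic_primeProd p.1).natDegree_mul (monic_primeProd p.2)]
  · exact correlationCount_eq_zero_of_not_disjoint ha hd

lemma correlationCount_le_one (ha : a ≠ 0)
    (h : n < (primeProd p.1).natDegree + (primeProd p.2).natDegree) :
    correlationCount a n p ≤ 1 := by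
  by_cases hd : Disjoint p.1 p.2
  · obtain ⟨r, hr⟩ := exists_correlationCount_eq_card_filter_dvd_sub (a := a) (n := n) hd
    rw [hr]
    apply card_filter_dvd_sub_monicsOfDegree_le_one
    rwa [(monic_primeProd p.1).natDegree_mul (monic_primeProd p.2)]
  · simp [correlationCount_eq_zero_of_not_disjoint ha hd]

lemma natDegree_primeProd_le_of_correlationCount_ne_zero (hn : 1 ≤ n)
    (h : correlationCount a n p ≠ 0) :
    (primeProd p.1).natDegree ≤ n ∧ (primeProd p.2).natDegree ≤ n := by
  obtain ⟨f, hf⟩ := card_ne_zero.mp h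
  obtain ⟨hfn, hf₁, hf₂⟩ := mem_filter.mp hf
  have hfa := mem_monicsOfDegree.mp (add_C_mem_monicsOfDegree hn hfn a)
  obtain ⟨hfm, hfd⟩ := mem_monicsOfDegree.mp hfn
  exact ⟨hfd ▸ natDegree_le_of_dvd hf₁ hfm.ne_zero, hfa.2 ▸ natDegree_le_of_dvd hf₂ hfa.1.ne_zero⟩

end Count

section Terms

variable {K : Type*} [Field K] [Fintype K]

noncomputable def correlationTerm (a : K) (n : ℕ)
    (p : Finset (MonicIrreducible K) × Finset (MonicIrreducible K)) : ℝ :=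
  mobiusWeight p.1 * mobiusWeight p.2 * correlationCount a n p * (Fintype.card K : ℝ)⁻¹ ^ n

variable (K) in
/-- `μ(d)μ(e)/(|d|²|e|²)` if `d = primeProd p.1` and `e = primeProd p.2` are coprime, else `0`. -/
noncomputable def eulerTerm : Finset (MonicIrreducible K) × Finset (MonicIrreducible K) → ℝ :=
  disjointPairTerm fun P => (Fintype.card K : ℝ)⁻¹ ^ (2 * P.1.natDegree)

lemma prod_neg_inv_card_pow_two_mul (T : Finset (MonicIrreducible K)) :
    ∏ P ∈ T, -(Fintype.card K : ℝ)⁻¹ ^ (2 * P.1.natDegree) =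
      mobiusWeight T * (Fintype.card K : ℝ)⁻¹ ^ (primeProd T).natDegree := by
  rw [mobiusWeight, ← pow_one (Fintype.card K : ℝ)⁻¹, ← prod_inv_card_pow, ← prod_mul_distrib]
  exact prod_congr rfl fun P _ => by ring

lemma abs_eulerTerm_le (p : Finset (MonicIrreducible K) × Finset (MonicIrreducible K)) :
    |eulerTerm K p| ≤ ((Fintype.card K : ℝ)⁻¹ ^ 2) ^ (primeProd p.1).natDegree *
      ((Fintype.card K : ℝ)⁻¹ ^ 2) ^ (primeProd p.2).natDegree := by
  unfold eulerTerm disjointPairTerm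
  split_ifs
  · simp only [abs_mul, abs_prod, abs_neg, abs_pow, abs_inv, Nat.abs_cast, pow_mul,
      prod_inv_card_pow, le_refl]
  · simp only [abs_zero]
    positivity

variable {a : K} {n : ℕ} {p : Finset (MonicIrreducible K) × Finset (MonicIrreducible K)}

lemma correlationTerm_eq_eulerTerm (ha : a ≠ 0)
    (h : (primeProd p.1).natDegree + (primeProd p.2).natDegree ≤ n) :
    correlationTerm a n p = eulerTerm K p := by
  rw [correlationTerm, eulerTerm, disjointPairTerm, correlationCount_eq ha h]
  split_ifs
  · have hq : (Fintype.card K : ℝ) ≠ 0 := by positivity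
    obtain ⟨k, rfl⟩ := Nat.exists_eq_add_of_le h
    rw [prod_neg_inv_card_pow_two_mul, prod_neg_inv_card_pow_two_mul, Nat.add_sub_cancel_left]
    have hk : (Fintype.card K : ℝ) ^ k * (Fintype.card K : ℝ)⁻¹ ^ k = 1 := by
      rw [← mul_pow, mul_inv_cancel₀ hq, one_pow]
    push_cast
    linear_combination mobiusWeight p.1 * mobiusWeight p.2 *
      (Fintype.card K : ℝ)⁻¹ ^ (primeProd p.1).natDegree *
      (Fintype.card K : ℝ)⁻¹ ^ (primeProd p.2).natDegree * hk
  · simp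

lemma abs_correlationTerm_le (ha : a ≠ 0)
    (h : n < (primeProd p.1).natDegree + (primeProd p.2).natDegree) :
    |correlationTerm a n p| ≤ (Fintype.card K : ℝ)⁻¹ ^ (primeProd p.1).natDegree *
      (Fintype.card K : ℝ)⁻¹ ^ (primeProd p.2).natDegree * (Fintype.card K : ℝ)⁻¹ ^ n := by
  rw [correlationTerm, abs_mul, abs_mul, abs_mul, abs_mobiusWeight, abs_mobiusWeight, Nat.abs_cast,
    abs_of_nonneg (by positivity)]
  have hcount : (correlationCount a n p : ℝ) ≤ 1 := by exact_mod_cast correlationCount_le_one ha h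
  exact mul_le_mul_of_nonneg_right (mul_le_of_le_one_right (by positivity) hcount) (by positivity)

end Terms

section Expansion

variable {K : Type*} [Field K] [Fintype K]

noncomputable def correlation (a : K) (n : ℕ) : ℝ :=
  (∑ᶠ f ∈ {f : K[X] | f.Monic ∧ f.natDegree = n},
      PhiR f * PhiR (f + C a) /
        ((Fintype.card K : ℝ) ^ f.natDegree * (Fintype.card K : ℝ) ^ (f + C a).natDegree)) /
    (Fintype.card K : ℝ) ^ n

variable {a : K} {n : ℕ} {p : Finset (MonicIrreducible K) × Finset (MonicIrreducible K)}

lemma subset_monicIrreduciblesOfDegreeLE {T : Finset (MonicIrreducible K)}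
    (h : (primeProd T).natDegree ≤ n) : T ⊆ monicIrreduciblesOfDegreeLE K n :=
  fun _ hP => mem_monicIrreduciblesOfDegreeLE.mpr ((natDegree_le_natDegree_primeProd hP).trans h)

lemma phiR_div_eq_sum {f : K[X]} (hf : f ∈ monicsOfDegree K n) :
    PhiR f / (Fintype.card K : ℝ) ^ f.natDegree =
      ∑ T ∈ (monicIrreduciblesOfDegreeLE K n).powerset,
        if primeProd T ∣ f then mobiusWeight T else 0 := by
  obtain ⟨hfm, hfn⟩ := mem_monicsOfDegree.mp hf
  rw [phiR_eq_sum fun P hP => mem_monicIrreduciblesOfDegreeLE.mpr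
    (hfn ▸ natDegree_le_of_dvd hP hfm.ne_zero), mul_div_cancel_left₀ _ (by positivity)]

lemma correlationTerm_eq_zero_of_notMem (hn : 1 ≤ n)
    (hp : p ∉ (monicIrreduciblesOfDegreeLE K n).powerset ×ˢ
      (monicIrreduciblesOfDegreeLE K n).powerset) : correlationTerm a n p = 0 := by
  by_contra hne
  have hcount : correlationCount a n p ≠ 0 := fun h0 => hne (by simp [correlationTerm, h0])
  obtain ⟨h₁, h₂⟩ := natDegree_primeProd_le_of_correlationCount_ne_zero hn hcount
  exact hp (mem_product.mpr ⟨mem_powerset.mpr (subset_monicIrreduciblesOfDegreeLE h₁),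
    mem_powerset.mpr (subset_monicIrreduciblesOfDegreeLE h₂)⟩)

lemma correlation_eq_tsum (hn : 1 ≤ n) : correlation a n = ∑' p, correlationTerm a n p := by
  set S := monicIrreduciblesOfDegreeLE K n
  have hterm : ∀ f ∈ monicsOfDegree K n,
      PhiR f * PhiR (f + C a) /
          ((Fintype.card K : ℝ) ^ f.natDegree * (Fintype.card K : ℝ) ^ (f + C a).natDegree) =
        ∑ p ∈ S.powerset ×ˢ S.powerset,
          if primeProd p.1 ∣ f ∧ primeProd p.2 ∣ f + C a then
            mobiusWeight p.1 * mobiusWeight p.2 else 0 := by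
    intro f hf
    rw [mul_div_mul_comm, phiR_div_eq_sum hf, phiR_div_eq_sum (add_C_mem_monicsOfDegree hn hf a),
      sum_mul_sum, sum_product]
    simp only [ite_zero_mul_ite_zero, S]
  rw [correlation, tsum_eq_sum fun _ => correlationTerm_eq_zero_of_notMem hn,
    finsum_mem_eq_finite_toFinset_sum _ (finite_setOf_monic_natDegree_eq n), ← monicsOfDegree,
    sum_congr rfl hterm, sum_comm, sum_div]
  refine sum_congr rfl fun p _ => ?_
  rw [← sum_filter, sum_const, nsmul_eq_mul, correlationTerm, correlationCount, div_eq_mul_inv,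
    inv_pow]
  ring

end Expansion

section DegreeSums

variable {K : Type*} [Field K] [Fintype K]

lemma sum_le_sum_card_pow_mul (v : Finset (Finset (MonicIrreducible K))) {φ : ℕ → ℝ}
    (hφ : ∀ k, 0 ≤ φ k) :
    ∑ T ∈ v, φ (primeProd T).natDegree ≤
      ∑ k ∈ v.image fun T => (primeProd T).natDegree, (Fintype.card K : ℝ) ^ k * φ k := by
  rw [Finset.sum_comp]
  refine sum_le_sum fun k _ => ?_
  rw [nsmul_eq_mul]
  refine mul_le_mul_of_nonneg_right ?_ (hφ k)
  rw [← Nat.cast_pow, ← card_monicsOfDegree, Nat.cast_le]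
  refine card_le_card_of_injOn primeProd (fun T hT => ?_) primeProd_injective.injOn
  exact mem_monicsOfDegree.mpr ⟨monic_primeProd T, (mem_filter.mp hT).2⟩

lemma sum_inv_card_sq_pow_le (v : Finset (Finset (MonicIrreducible K))) {c : ℕ}
    (h : ∀ T ∈ v, c ≤ (primeProd T).natDegree) :
    ∑ T ∈ v, ((Fintype.card K : ℝ)⁻¹ ^ 2) ^ (primeProd T).natDegree ≤
      2 * (Fintype.card K : ℝ)⁻¹ ^ c := by
  set x := (Fintype.card K : ℝ)⁻¹
  have hx0 : 0 ≤ x := by positivity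
  have hx1 : x ≤ 1 / 2 := by
    have hq : (2 : ℝ) ≤ Fintype.card K := by exact_mod_cast Fintype.one_lt_card (α := K)
    rw [one_div]
    exact inv_anti₀ two_pos hq
  set I := v.image fun T => (primeProd T).natDegree
  have hI : I ⊆ Ico c (I.sup id + 1) := fun k hk => by
    obtain ⟨T, hT, rfl⟩ := mem_image.mp hk
    exact mem_Ico.mpr ⟨h T hT, Nat.lt_succ_of_le (le_sup (f := id) hk)⟩
  calc ∑ T ∈ v, (x ^ 2) ^ (primeProd T).natDegree
      ≤ ∑ k ∈ I, (Fintype.card K : ℝ) ^ k * (x ^ 2) ^ k :=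
        sum_le_sum_card_pow_mul v fun k => by positivity
    _ = ∑ k ∈ I, x ^ k := sum_congr rfl fun k _ => by
        rw [← mul_pow, sq, ← mul_assoc, mul_inv_cancel₀ (by positivity), one_mul]
    _ ≤ ∑ k ∈ Ico c (I.sup id + 1), x ^ k :=
        sum_le_sum_of_subset_of_nonneg hI fun k _ _ => by positivity
    _ ≤ x ^ c / (1 - x) := geom_sum_Ico_le_of_lt_one hx0 (by linarith)
    _ ≤ 2 * x ^ c := by
        rw [div_le_iff₀ (by linarith)]
        nlinarith [pow_nonneg hx0 c]

lemma sum_inv_card_pow_le (v : Finset (Finset (MonicIrreducible K))) {n : ℕ}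
    (h : ∀ T ∈ v, (primeProd T).natDegree ≤ n) :
    ∑ T ∈ v, (Fintype.card K : ℝ)⁻¹ ^ (primeProd T).natDegree ≤ n + 1 := by
  have hI : (v.image fun T => (primeProd T).natDegree) ⊆ range (n + 1) := fun k hk => by
    obtain ⟨T, hT, rfl⟩ := mem_image.mp hk
    exact mem_range.mpr (Nat.lt_succ_of_le (h T hT))
  calc ∑ T ∈ v, (Fintype.card K : ℝ)⁻¹ ^ (primeProd T).natDegree
      ≤ ∑ k ∈ v.image fun T => (primeProd T).natDegree,
          (Fintype.card K : ℝ) ^ k * (Fintype.card K : ℝ)⁻¹ ^ k :=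
        sum_le_sum_card_pow_mul v fun k => by positivity
    _ = #(v.image fun T => (primeProd T).natDegree) := by
        simp
    _ ≤ n + 1 := by exact_mod_cast (card_le_card hI).trans (card_range _).le

end DegreeSums

section Estimates

variable {K : Type*} [Field K] [Fintype K]

lemma sum_pair_inv_card_sq_pow_le
    (u : Finset (Finset (MonicIrreducible K) × Finset (MonicIrreducible K))) {c₁ c₂ : ℕ}
    (h : ∀ p ∈ u, c₁ ≤ (primeProd p.1).natDegree ∧ c₂ ≤ (primeProd p.2).natDegree) :
    ∑ p ∈ u, ((Fintype.card K : ℝ)⁻¹ ^ 2) ^ (primeProd p.1).natDegree *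
        ((Fintype.card K : ℝ)⁻¹ ^ 2) ^ (primeProd p.2).natDegree ≤
      2 * (Fintype.card K : ℝ)⁻¹ ^ c₁ * (2 * (Fintype.card K : ℝ)⁻¹ ^ c₂) := by
  have hφ (T : Finset (MonicIrreducible K)) :
      0 ≤ ((Fintype.card K : ℝ)⁻¹ ^ 2) ^ (primeProd T).natDegree := by positivity
  refine (sum_mul_le_sum_image_fst_mul_sum_image_snd u hφ hφ).trans
    (mul_le_mul ?_ ?_ (sum_nonneg fun _ _ => hφ _) (by positivity))
  · refine sum_inv_card_sq_pow_le _ fun T hT => ?_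
    obtain ⟨p, hp, rfl⟩ := mem_image.mp hT
    exact (h p hp).1
  · refine sum_inv_card_sq_pow_le _ fun T hT => ?_
    obtain ⟨p, hp, rfl⟩ := mem_image.mp hT
    exact (h p hp).2

lemma sum_pair_inv_card_sq_pow_le_of_lt
    (u : Finset (Finset (MonicIrreducible K) × Finset (MonicIrreducible K))) {n : ℕ}
    (h : ∀ p ∈ u, n < (primeProd p.1).natDegree + (primeProd p.2).natDegree) :
    ∑ p ∈ u, ((Fintype.card K : ℝ)⁻¹ ^ 2) ^ (primeProd p.1).natDegree *
        ((Fintype.card K : ℝ)⁻¹ ^ 2) ^ (primeProd p.2).natDegree ≤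
      8 * (Fintype.card K : ℝ)⁻¹ ^ ((n + 1) / 2) := by
  rw [← sum_filter_add_sum_filter_not u fun p => (n + 1) / 2 ≤ (primeProd p.1).natDegree]
  calc _ ≤ 2 * (Fintype.card K : ℝ)⁻¹ ^ ((n + 1) / 2) * (2 * (Fintype.card K : ℝ)⁻¹ ^ 0) +
        2 * (Fintype.card K : ℝ)⁻¹ ^ 0 * (2 * (Fintype.card K : ℝ)⁻¹ ^ ((n + 1) / 2)) := by
        refine add_le_add (sum_pair_inv_card_sq_pow_le _ fun p hp => ?_)
          (sum_pair_inv_card_sq_pow_le _ fun p hp => ?_)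
        · exact ⟨(mem_filter.mp hp).2, Nat.zero_le _⟩
        · have h₁ := h p (mem_filter.mp hp).1
          have h₂ := (mem_filter.mp hp).2
          exact ⟨Nat.zero_le _, by omega⟩
    _ = 8 * (Fintype.card K : ℝ)⁻¹ ^ ((n + 1) / 2) := by ring

lemma summable_eulerTerm : Summable (eulerTerm K) :=
  .of_norm_bounded (summable_of_sum_le (fun _ => by positivity) fun u =>
    sum_pair_inv_card_sq_pow_le u (c₁ := 0) (c₂ := 0) fun _ _ => ⟨Nat.zero_le _, Nat.zero_le _⟩)
    abs_eulerTerm_le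

lemma tprod_eq_tsum_eulerTerm :
    ∏' P : MonicIrreducible K, (1 - 2 / (Fintype.card K : ℝ) ^ (2 * P.1.natDegree)) =
      ∑' p, eulerTerm K p := by
  refine HasProd.tprod_eq ?_
  simpa only [div_eq_mul_inv, inv_pow] using hasProd_one_sub_two_mul summable_eulerTerm.hasSum

end Estimates

section MainEstimate

variable {K : Type*} [Field K] [Fintype K] {a : K} {n : ℕ}

lemma sum_abs_correlationTerm_le (hn : 1 ≤ n) (ha : a ≠ 0)
    (u : Finset (Finset (MonicIrreducible K) × Finset (MonicIrreducible K)))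
    (h : ∀ p ∈ u, n < (primeProd p.1).natDegree + (primeProd p.2).natDegree) :
    ∑ p ∈ u, |correlationTerm a n p| ≤ (n + 1) * (n + 1) * (Fintype.card K : ℝ)⁻¹ ^ n := by
  have hφ (T : Finset (MonicIrreducible K)) :
      0 ≤ (Fintype.card K : ℝ)⁻¹ ^ (primeProd T).natDegree := by positivity
  set v := {p ∈ u | correlationCount a n p ≠ 0}
  have hv : ∀ p ∈ v, (primeProd p.1).natDegree ≤ n ∧ (primeProd p.2).natDegree ≤ n :=
    fun p hp => natDegree_primeProd_le_of_correlationCount_ne_zero hn (mem_filter.mp hp).2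
  rw [← sum_filter_of_ne (p := fun p => correlationCount a n p ≠ 0) fun p _ hp h0 =>
    hp (by simp [correlationTerm, h0])]
  calc ∑ p ∈ v, |correlationTerm a n p|
      ≤ ∑ p ∈ v, (Fintype.card K : ℝ)⁻¹ ^ (primeProd p.1).natDegree *
          (Fintype.card K : ℝ)⁻¹ ^ (primeProd p.2).natDegree * (Fintype.card K : ℝ)⁻¹ ^ n :=
        sum_le_sum fun p hp => abs_correlationTerm_le ha (h p (mem_filter.mp hp).1)
    _ ≤ (n + 1) * (n + 1) * (Fintype.card K : ℝ)⁻¹ ^ n := by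
        rw [← sum_mul]
        refine mul_le_mul_of_nonneg_right
          ((sum_mul_le_sum_image_fst_mul_sum_image_snd v hφ hφ).trans
            (mul_le_mul ?_ ?_ (sum_nonneg fun _ _ => hφ _) (by positivity))) (by positivity)
        · refine sum_inv_card_pow_le _ fun T hT => ?_
          obtain ⟨p, hp, rfl⟩ := mem_image.mp hT
          exact (hv p hp).1
        · refine sum_inv_card_pow_le _ fun T hT => ?_
          obtain ⟨p, hp, rfl⟩ := mem_image.mp hT
          exact (hv p hp).2

lemma abs_correlation_sub_tsum_eulerTerm_le (ha : a ≠ 0) (hn : 1 ≤ n) :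
    |correlation a n - ∑' p, eulerTerm K p| ≤
      (n + 1) * (n + 1) * (Fintype.card K : ℝ)⁻¹ ^ n +
        8 * (Fintype.card K : ℝ)⁻¹ ^ ((n + 1) / 2) := by
  have hc : Summable (correlationTerm a n) :=
    summable_of_ne_finset_zero fun _ => correlationTerm_eq_zero_of_notMem hn
  have hd : Summable fun p => ‖correlationTerm a n p - eulerTerm K p‖ := by
    simpa only [Real.norm_eq_abs] using (hc.sub summable_eulerTerm).abs
  rw [correlation_eq_tsum hn, ← hc.tsum_sub summable_eulerTerm, ← Real.norm_eq_abs]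
  refine (norm_tsum_le_tsum_norm hd).trans (tsum_le_of_sum_le' (by positivity) fun u => ?_)
  have hsmall : ∀ p ∈ u, ‖correlationTerm a n p - eulerTerm K p‖ ≠ 0 →
      n < (primeProd p.1).natDegree + (primeProd p.2).natDegree := fun p _ hp => by
    by_contra hle
    exact hp (by rw [correlationTerm_eq_eulerTerm ha (not_lt.mp hle), sub_self, norm_zero])
  rw [← sum_filter_of_ne hsmall]
  set v := {p ∈ u | n < (primeProd p.1).natDegree + (primeProd p.2).natDegree}
  have hv : ∀ p ∈ v, n < (primeProd p.1).natDegree + (primeProd p.2).natDegree :=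
    fun p hp => (mem_filter.mp hp).2
  calc ∑ p ∈ v, ‖correlationTerm a n p - eulerTerm K p‖
      ≤ ∑ p ∈ v, (|correlationTerm a n p| + |eulerTerm K p|) :=
        sum_le_sum fun p _ => by rw [Real.norm_eq_abs]; exact abs_sub _ _
    _ = ∑ p ∈ v, |correlationTerm a n p| + ∑ p ∈ v, |eulerTerm K p| := sum_add_distrib
    _ ≤ _ := add_le_add (sum_abs_correlationTerm_le hn ha v hv)
        ((sum_le_sum fun p _ => abs_eulerTerm_le p).trans
          (sum_pair_inv_card_sq_pow_le_of_lt v hv))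

lemma abs_correlation_sub_tsum_eulerTerm_le_sqrt_pow (ha : a ≠ 0) (hn : 1 ≤ n) :
    |correlation a n - ∑' p, eulerTerm K p| ≤
      12 * ((n : ℝ) ^ 2 * √((Fintype.card K : ℝ)⁻¹) ^ n) := by
  set x := (Fintype.card K : ℝ)⁻¹
  have hx0 : 0 ≤ x := by positivity
  have hx1 : x ≤ 1 := inv_le_one_of_one_le₀ (by exact_mod_cast Fintype.card_pos)
  have hxρ : x ^ n ≤ √x ^ n :=
    pow_le_pow_left₀ hx0 ((Real.le_sqrt hx0 hx0).mpr (pow_le_of_le_one hx0 hx1 two_ne_zero)) n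
  have hhalf : x ^ ((n + 1) / 2) ≤ √x ^ n := calc
    x ^ ((n + 1) / 2) = √x ^ (2 * ((n + 1) / 2)) := by rw [pow_mul, Real.sq_sqrt hx0]
    _ ≤ √x ^ n :=
      pow_le_pow_of_le_one (Real.sqrt_nonneg x) (Real.sqrt_le_one.mpr hx1) (by omega)
  have hn' : (1 : ℝ) ≤ n := by exact_mod_cast hn
  have hρ : 0 ≤ √x ^ n := by positivity
  calc |correlation a n - ∑' p, eulerTerm K p|
      ≤ (n + 1) * (n + 1) * x ^ n + 8 * x ^ ((n + 1) / 2) :=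
        abs_correlation_sub_tsum_eulerTerm_le ha hn
    _ ≤ (n + 1) * (n + 1) * √x ^ n + 8 * √x ^ n := by gcongr
    _ ≤ 12 * ((n : ℝ) ^ 2 * √x ^ n) := by
        have h11 : (0 : ℝ) ≤ 11 * n + 9 := by positivity
        nlinarith [mul_nonneg hρ (mul_nonneg (sub_nonneg.mpr hn') h11)]

end MainEstimate

end PolynomialTotientCorrelation

open PolynomialTotientCorrelation in
theorem phi_correlation_monic_general (Fq : Type*) [Field Fq] [Fintype Fq]
    (a : Fq) (ha : a ≠ 0) (B : ℝ) :
    (fun n : ℕ =>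
        (∑ᶠ f ∈ {f : Polynomial Fq | f.Monic ∧ f.natDegree = n},
            PhiR f * PhiR (f + Polynomial.C a) /
              ((Fintype.card Fq : ℝ) ^ f.natDegree *
                (Fintype.card Fq : ℝ) ^ (f + Polynomial.C a).natDegree)) /
          (Fintype.card Fq : ℝ) ^ n -
        ∏' P : {P : Polynomial Fq // P.Monic ∧ Irreducible P},
          (1 - 2 / (Fintype.card Fq : ℝ) ^ (2 * P.1.natDegree)))
      =O[atTop] (fun n : ℕ => (n : ℝ) ^ (-B)) := by
  have hρ : √((Fintype.card Fq : ℝ)⁻¹) < 1 := (Real.sqrt_lt' one_pos).mpr <| by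
    rw [one_pow]
    exact inv_lt_one_of_one_lt₀ (by exact_mod_cast Fintype.one_lt_card (α := Fq))
  rw [tprod_eq_tsum_eulerTerm]
  refine IsBigO.trans ?_ (isBigO_pow_mul_pow_rpow_neg 2 (Real.sqrt_nonneg _) hρ B)
  refine IsBigO.of_bound 12 (eventually_atTop.mpr ⟨1, fun n hn => ?_⟩)
  rw [Real.norm_eq_abs, Real.norm_of_nonneg (by positivity)]
  exact abs_correlation_sub_tsum_eulerTerm_le_sqrt_pow ha hn

/-- For fixed `a ∈ 𝔽_q^*` and any `0 < B < 1`,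
`q^{-n} ∑_{f ∈ M_{n,q}} Φ(f)Φ(f+a)/(|f||f+a|) = ∏_P (1 - 2 q^{-2 deg P}) + O(n^{-B})`. -/
theorem phi_correlation_monic (Fq : Type*) [Field Fq] [Fintype Fq]
    (a : Fq) (ha : a ≠ 0) (B : ℝ) (hB0 : 0 < B) (hB1 : B < 1) :
    (fun n : ℕ =>
        (∑ᶠ f ∈ {f : Polynomial Fq | f.Monic ∧ f.natDegree = n},
            PhiR f * PhiR (f + Polynomial.C a) /
              ((Fintype.card Fq : ℝ) ^ f.natDegree *
                (Fintype.card Fq : ℝ) ^ (f + Polynomial.C a).natDegree)) /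
          (Fintype.card Fq : ℝ) ^ n -
        ∏' P : {P : Polynomial Fq // P.Monic ∧ Irreducible P},
          (1 - 2 / (Fintype.card Fq : ℝ) ^ (2 * P.1.natDegree)))
      =O[atTop] (fun n : ℕ => (n : ℝ) ^ (-B)) :=
  phi_correlation_monic_general Fq a ha B
end
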